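/- For every t > 0 and every x > 0, y > 0, lim_{ξ→0⁺} (K_0(e^{−y/ξ})/K_0(e^{−x/ξ}))·Q_ξ(t,y|x) = (y/x)·(2πt)^{−1/2}·(e^{−(x−y)²/(2t)} − e^{−(x+y)²/(2t)}), which is the transition probability density of the three-dimensional Bessel process BES(3). -/

import Mathlib

open MeasureTheory Filter Topology

/-- Macdonald function of order zero: `K₀(z) = ∫_0^∞ e^{-z cosh u} du`. -/
noncomputable def K0 (z : ℝ) : ℝ := ∫ u in Set.Ioi (0:ℝ), Real.exp (-(z * Real.cosh u))

/-- Macdonald function of imaginary order: `K_{ik}(z) = ∫_0^∞ e^{-z cosh u} cos(ku) du`. -/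
noncomputable def Kik (k z : ℝ) : ℝ :=
  ∫ u in Set.Ioi (0:ℝ), Real.exp (-(z * Real.cosh u)) * Real.cos (k * u)

/-- Transition probability density `Q_ξ(t,y|x)` of the ξ-killing Brownian motion. -/
noncomputable def Qxi (ξ t y x : ℝ) : ℝ :=
  (1 / Real.pi ^ 2) *
    ∫ k : ℝ, Real.exp (-(k ^ 2 * t) / 2) * Kik (ξ * k) (Real.exp (-(x / ξ)))
      * Kik (ξ * k) (Real.exp (-(y / ξ))) * (ξ * k * Real.sinh (Real.pi * ξ * k))

/-- Survival probability `N_ξ(T,x) = ∫_ℝ Q_ξ(T,y|x) dy`. -/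
noncomputable def Nxi (ξ T x : ℝ) : ℝ := ∫ y : ℝ, Qxi ξ T y x

/-!
Substituting `u = v / ξ` gives `ξ K_{iξk}(e^{-x/ξ}) = ∫_0^∞ exp(-e^{-x/ξ} cosh(v/ξ)) cos(kv) dv`,
and the weight `exp(-e^{-x/ξ} cosh(v/ξ))` tends to the indicator of `(0, x)` as `ξ → 0⁺`,
dominated by `e^{x-v}` for `ξ ≤ 1`. Hence `ξ K_{iξk}(e^{-x/ξ}) → sin(kx)/k`,
`ξ K_0(e^{-x/ξ}) → x` and, with `sinh(πξk)/ξ → πk`, dominated convergence in `k` (the integrand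
is `O(k² e^{-tk²/4})` uniformly in `ξ ≤ 1`) turns `Q_ξ(t,y|x)` into
`π⁻¹ ∫ e^{-k²t/2} sin(kx) sin(ky) dk`, the Gaussian density of Brownian motion killed at `0`.
The ratio of the `K_0` factors contributes `y / x`.
-/

open Real Set

lemma le_exp_div_two (s : ℝ) : s ≤ exp s / 2 := by
  have h₁ := add_one_le_exp (s - 1)
  have h₂ : exp s = exp (s - 1) * exp 1 := by rw [← exp_add, sub_add_cancel]
  nlinarith [exp_one_gt_two, exp_pos (s - 1)]

lemma exp_div_two_le_cosh (a : ℝ) : exp a / 2 ≤ cosh a := by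
  rw [cosh_eq]; linarith [exp_pos (-a)]

lemma cosh_le_exp {a : ℝ} (ha : 0 ≤ a) : cosh a ≤ exp a := by
  rw [cosh_eq]; linarith [exp_le_exp.2 (show -a ≤ a by linarith)]

lemma sinh_le_mul_exp {a : ℝ} (ha : 0 ≤ a) : sinh a ≤ a * exp a := by
  have h₁ := add_one_le_exp (-a)
  have h₂ : exp (-a) * exp a = 1 := by rw [← exp_add, neg_add_cancel, exp_zero]
  rw [sinh_eq]
  nlinarith [one_le_exp ha, exp_pos a]

lemma mul_abs_le_sq_div_add {t : ℝ} (ht : 0 < t) (c k : ℝ) :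
    c * |k| ≤ c ^ 2 / t + t / 4 * k ^ 2 := by
  rw [div_add' _ _ _ ht.ne', le_div_iff₀ ht, ← sq_abs k]
  nlinarith [sq_nonneg (t * |k| - 2 * c)]

lemma tendsto_sinh_mul_div (c : ℝ) :
    Tendsto (fun ξ => sinh (c * ξ) / ξ) (𝓝[>] 0) (𝓝 c) := by
  have h : HasDerivAt (fun ξ => sinh (c * ξ)) c 0 := by
    simpa using ((hasDerivAt_id (0 : ℝ)).const_mul c).sinh
  simpa [div_eq_inv_mul] using h.tendsto_slope_zero_right

noncomputable def smoothIndicator (ξ x v : ℝ) : ℝ := exp (-(exp (-(x / ξ)) * cosh (v / ξ)))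

lemma smoothIndicator_nonneg (ξ x v : ℝ) : 0 ≤ smoothIndicator ξ x v := (exp_pos _).le

lemma continuous_smoothIndicator (ξ x : ℝ) : Continuous (smoothIndicator ξ x) := by
  unfold smoothIndicator; fun_prop

lemma exp_sub_div_div_two_le_exp_mul_cosh {ξ : ℝ} (x v : ℝ) :
    exp ((v - x) / ξ) / 2 ≤ exp (-(x / ξ)) * cosh (v / ξ) := by
  calc exp ((v - x) / ξ) / 2 = exp (-(x / ξ)) * (exp (v / ξ) / 2) := by
        rw [mul_div_assoc', ← exp_add]; ring_nf
    _ ≤ _ := mul_le_mul_of_nonneg_left (exp_div_two_le_cosh _) (exp_pos _).le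

lemma smoothIndicator_le_exp_sub {ξ : ℝ} (hξ : 0 < ξ) (hξ₁ : ξ ≤ 1) (x v : ℝ) :
    smoothIndicator ξ x v ≤ exp (x - v) := by
  rw [smoothIndicator, exp_le_exp, neg_le, neg_sub]
  rcases le_total v x with hvx | hxv
  · have := cosh_pos (v / ξ)
    nlinarith [exp_pos (-(x / ξ))]
  · calc v - x ≤ (v - x) / ξ := by rw [le_div_iff₀ hξ]; nlinarith
      _ ≤ exp ((v - x) / ξ) / 2 := le_exp_div_two _
      _ ≤ _ := exp_sub_div_div_two_le_exp_mul_cosh x v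

lemma tendsto_smoothIndicator_of_lt {x v : ℝ} (hv : 0 ≤ v) (hvx : v < x) :
    Tendsto (fun ξ => smoothIndicator ξ x v) (𝓝[>] 0) (𝓝 1) := by
  have hexp : Tendsto (fun ξ => exp ((v - x) / ξ)) (𝓝[>] 0) (𝓝 0) :=
    tendsto_exp_atBot.comp ((tendsto_inv_nhdsGT_zero.const_mul_atTop_of_neg
      (sub_neg.2 hvx)).congr fun ξ => (div_eq_mul_inv _ _).symm)
  have key : Tendsto (fun ξ => exp (-(x / ξ)) * cosh (v / ξ)) (𝓝[>] 0) (𝓝 0) := by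
    refine squeeze_zero' (Eventually.of_forall fun ξ => by positivity) ?_ hexp
    filter_upwards [self_mem_nhdsWithin] with ξ (hξ : 0 < ξ)
    calc exp (-(x / ξ)) * cosh (v / ξ) ≤ exp (-(x / ξ)) * exp (v / ξ) :=
          mul_le_mul_of_nonneg_left (cosh_le_exp (by positivity)) (exp_pos _).le
      _ = exp ((v - x) / ξ) := by rw [← exp_add]; ring_nf
  simpa [smoothIndicator, Function.comp_def] using (continuous_exp.tendsto _).comp key.neg

lemma tendsto_smoothIndicator_of_gt {x v : ℝ} (hxv : x < v) :
    Tendsto (fun ξ => smoothIndicator ξ x v) (𝓝[>] 0) (𝓝 0) := by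
  have hexp : Tendsto (fun ξ => exp ((v - x) / ξ) / 2) (𝓝[>] 0) atTop :=
    (tendsto_exp_atTop.comp ((tendsto_inv_nhdsGT_zero.const_mul_atTop
      (sub_pos.2 hxv)).congr fun ξ => (div_eq_mul_inv _ _).symm)).atTop_div_const two_pos
  exact tendsto_exp_atBot.comp <| tendsto_neg_atBot_iff.2 <|
    tendsto_atTop_mono (fun _ => exp_sub_div_div_two_le_exp_mul_cosh x v) hexp

lemma integrableOn_const_mul_exp_sub (C x : ℝ) :
    IntegrableOn (fun v => C * exp (x - v)) (Ioi 0) := by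
  refine IntegrableOn.congr_fun ((integrableOn_exp_neg_Ioi 0).const_mul (C * exp x))
    (fun v _ => ?_) measurableSet_Ioi
  rw [sub_eq_add_neg, exp_add, mul_assoc]

lemma integral_const_mul_exp_sub (C x : ℝ) :
    ∫ v in Ioi 0, C * exp (x - v) = C * exp x := by
  simp_rw [sub_eq_add_neg, exp_add, integral_const_mul, integral_exp_neg_Ioi_zero, mul_one]

lemma abs_smoothIndicator_mul_le {ξ : ℝ} (hξ : 0 < ξ) (hξ₁ : ξ ≤ 1) {f : ℝ → ℝ} {C : ℝ}
    (hfC : ∀ v, |f v| ≤ C) (x v : ℝ) :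
    |smoothIndicator ξ x v * f v| ≤ C * exp (x - v) := by
  rw [abs_mul, abs_of_nonneg (smoothIndicator_nonneg ξ x v), mul_comm]
  exact mul_le_mul (hfC v) (smoothIndicator_le_exp_sub hξ hξ₁ x v)
    (smoothIndicator_nonneg ξ x v) ((abs_nonneg _).trans (hfC v))

lemma abs_integral_smoothIndicator_mul_le {ξ : ℝ} (hξ : 0 < ξ) (hξ₁ : ξ ≤ 1)
    {f : ℝ → ℝ} {C : ℝ} (hfC : ∀ v, |f v| ≤ C) (x : ℝ) :
    |∫ v in Ioi 0, smoothIndicator ξ x v * f v| ≤ C * exp x := by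
  rw [← integral_const_mul_exp_sub]
  exact norm_integral_le_of_norm_le (f := fun v => smoothIndicator ξ x v * f v)
    (integrableOn_const_mul_exp_sub C x)
    (Eventually.of_forall fun v => by
      simpa only [Real.norm_eq_abs] using abs_smoothIndicator_mul_le hξ hξ₁ hfC x v)

lemma tendsto_integral_smoothIndicator_mul {f : ℝ → ℝ} {C : ℝ} (hf : Measurable f)
    (hfC : ∀ v, |f v| ≤ C) (x : ℝ) :
    Tendsto (fun ξ => ∫ v in Ioi 0, smoothIndicator ξ x v * f v) (𝓝[>] 0)
      (𝓝 (∫ v in Ioo 0 x, f v)) := by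
  rw [← inter_eq_self_of_subset_left Ioo_subset_Ioi_self,
    ← Measure.restrict_restrict measurableSet_Ioo, ← integral_indicator measurableSet_Ioo]
  refine tendsto_integral_filter_of_dominated_convergence (fun v => C * exp (x - v))
    (Eventually.of_forall fun ξ =>
      ((continuous_smoothIndicator ξ x).measurable.mul hf).aestronglyMeasurable) ?_
    (integrableOn_const_mul_exp_sub C x) ?_
  · filter_upwards [Ioc_mem_nhdsGT one_pos] with ξ hξ
    exact Eventually.of_forall fun v => by
      simpa only [Real.norm_eq_abs] using abs_smoothIndicator_mul_le hξ.1 hξ.2 hfC x v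
  · have hne : ∀ᵐ v ∂volume.restrict (Ioi (0 : ℝ)), v ≠ x :=
      ae_restrict_of_ae (by simp [ae_iff])
    filter_upwards [ae_restrict_mem measurableSet_Ioi, hne] with v (hv : 0 < v) hvx
    rcases hvx.lt_or_gt with hvx | hxv
    · rw [indicator_of_mem (show v ∈ Ioo 0 x from ⟨hv, hvx⟩)]
      simpa using (tendsto_smoothIndicator_of_lt hv.le hvx).mul_const (f v)
    · rw [indicator_of_notMem fun h => h.2.not_gt hxv]
      simpa using (tendsto_smoothIndicator_of_gt hxv).mul_const (f v)

noncomputable def scaledKik (ξ k x : ℝ) : ℝ := ξ * Kik (ξ * k) (exp (-(x / ξ)))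

lemma scaledKik_eq_integral {ξ : ℝ} (hξ : 0 < ξ) (k x : ℝ) :
    scaledKik ξ k x = ∫ v in Ioi 0, smoothIndicator ξ x v * cos (k * v) := by
  have h := integral_comp_mul_left_Ioi
    (fun u => exp (-(exp (-(x / ξ)) * cosh u)) * cos (ξ * k * u)) 0 (inv_pos.2 hξ)
  rw [mul_zero, inv_inv, smul_eq_mul] at h
  rw [scaledKik, Kik, ← h]
  refine setIntegral_congr_fun measurableSet_Ioi fun v _ => ?_
  simp only [smoothIndicator, inv_mul_eq_div]
  field_simp

lemma abs_scaledKik_le {ξ : ℝ} (hξ : 0 < ξ) (hξ₁ : ξ ≤ 1) (k x : ℝ) :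
    |scaledKik ξ k x| ≤ exp x := by
  simpa [scaledKik_eq_integral hξ] using
    abs_integral_smoothIndicator_mul_le hξ hξ₁ (fun v => abs_cos_le_one (k * v)) x

lemma tendsto_scaledKik (k x : ℝ) :
    Tendsto (fun ξ => scaledKik ξ k x) (𝓝[>] 0) (𝓝 (∫ v in Ioo 0 x, cos (k * v))) :=
  (tendsto_integral_smoothIndicator_mul (by fun_prop) (fun v => abs_cos_le_one (k * v)) x).congr'
    (eventually_nhdsWithin_of_forall fun _ hξ => (scaledKik_eq_integral hξ k x).symm)

lemma mul_integral_Ioo_cos {x : ℝ} (hx : 0 ≤ x) (k : ℝ) :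
    k * ∫ v in Ioo 0 x, cos (k * v) = sin (k * x) := by
  rcases eq_or_ne k 0 with rfl | hk
  · simp
  rw [← integral_Ioc_eq_integral_Ioo, ← intervalIntegral.integral_of_le hx,
    intervalIntegral.integral_comp_mul_left (fun u => cos u) hk, integral_cos]
  simp [hk]

lemma integrableOn_exp_neg_mul_cosh {z : ℝ} (hz : 0 < z) :
    IntegrableOn (fun u => exp (-(z * cosh u))) (Ioi 0) := by
  refine ((exp_neg_integrableOn_Ioi 0 hz).mono' (by fun_prop) ?_)
  filter_upwards with u
  rw [Real.norm_eq_abs, abs_of_pos (exp_pos _), exp_le_exp, neg_mul, neg_le_neg_iff]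
  exact mul_le_mul_of_nonneg_left ((le_exp_div_two u).trans (exp_div_two_le_cosh u)) hz.le

lemma continuous_Kik {z : ℝ} (hz : 0 < z) : Continuous fun k => Kik k z := by
  refine continuous_of_dominated (fun k => (by fun_prop : Continuous _).aestronglyMeasurable)
    (fun k => Eventually.of_forall fun u => ?_) (integrableOn_exp_neg_mul_cosh hz)
    (Eventually.of_forall fun u => by fun_prop)
  rw [norm_mul, Real.norm_eq_abs, abs_of_pos (exp_pos _)]
  exact mul_le_of_le_one_right (exp_pos _).le (abs_cos_le_one _)

lemma Kik_zero (z : ℝ) : Kik 0 z = K0 z := by simp [Kik, K0]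

lemma tendsto_mul_K0 {x : ℝ} (hx : 0 ≤ x) :
    Tendsto (fun ξ => ξ * K0 (exp (-(x / ξ)))) (𝓝[>] 0) (𝓝 x) := by
  simpa [scaledKik, Kik_zero, hx] using tendsto_scaledKik 0 x

lemma tendsto_K0_div_K0 {x y : ℝ} (hx : 0 < x) (hy : 0 ≤ y) :
    Tendsto (fun ξ => K0 (exp (-(y / ξ))) / K0 (exp (-(x / ξ)))) (𝓝[>] 0) (𝓝 (y / x)) :=
  ((tendsto_mul_K0 hy).div (tendsto_mul_K0 hx.le) hx.ne').congr'
    (eventually_nhdsWithin_of_forall fun _ hξ => mul_div_mul_left _ _ (ne_of_gt hξ))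

open Complex in
lemma cos_mul_exp_neg_mul_sq_eq_re (b c k : ℝ) :
    Real.cos (c * k) * Real.exp (-b * k ^ 2) = (cexp (I * c * k) * cexp (-b * k ^ 2)).re := by
  have h₁ : I * c * k = ((c * k : ℝ) : ℂ) * I := by push_cast; ring
  have h₂ : -(b : ℂ) * k ^ 2 = ((-b * k ^ 2 : ℝ) : ℂ) := by push_cast; ring
  rw [h₁, h₂, ← ofReal_exp, re_mul_ofReal, exp_ofReal_mul_I_re]

open Complex in
lemma integrable_cexp_I_mul_mul_cexp_neg_mul_sq {b : ℝ} (hb : 0 < b) (c : ℝ) :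
    Integrable fun k : ℝ => cexp (I * c * k) * cexp (-b * k ^ 2) :=
  (integrable_cexp_quadratic (b := b) (by simpa using hb) (I * c) 0).congr
    (Eventually.of_forall fun k => by simp only [add_zero, ← Complex.exp_add]; ring_nf)

lemma integrable_cos_mul_exp_neg_mul_sq {b : ℝ} (hb : 0 < b) (c : ℝ) :
    Integrable fun k => cos (c * k) * exp (-b * k ^ 2) :=
  (integrable_cexp_I_mul_mul_cexp_neg_mul_sq hb c).re.congr
    (Eventually.of_forall fun k => (cos_mul_exp_neg_mul_sq_eq_re b c k).symm)

open Complex in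
lemma integral_cos_mul_exp_neg_mul_sq {b : ℝ} (hb : 0 < b) (c : ℝ) :
    ∫ k, Real.cos (c * k) * Real.exp (-b * k ^ 2) = √(π / b) * Real.exp (-c ^ 2 / (4 * b)) := by
  simp_rw [cos_mul_exp_neg_mul_sq_eq_re b c]
  refine (integral_re (integrable_cexp_I_mul_mul_cexp_neg_mul_sq hb c)).trans ?_
  rw [RCLike.re_to_complex, fourierIntegral_gaussian (by simpa using hb)]
  have h₁ : (π / (b : ℂ)) ^ (1 / 2 : ℂ) = ((√(π / b) : ℝ) : ℂ) := by
    rw [sqrt_eq_rpow, ofReal_cpow (by positivity)]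
    push_cast; rfl
  have h₂ : -(c : ℂ) ^ 2 / (4 * b) = ((-c ^ 2 / (4 * b) : ℝ) : ℂ) := by push_cast; ring
  rw [h₁, h₂, ← ofReal_exp, ← ofReal_mul, ofReal_re]

lemma integrable_sq_mul_exp_neg_mul_sq {b : ℝ} (hb : 0 < b) :
    Integrable fun k : ℝ => k ^ 2 * exp (-b * k ^ 2) := by
  simpa only [rpow_two] using integrable_rpow_mul_exp_neg_mul_sq hb (s := 2) (by norm_num)

noncomputable def killedHeatKernel (t x y : ℝ) : ℝ :=
  (√(2 * π * t))⁻¹ * (exp (-(x - y) ^ 2 / (2 * t)) - exp (-(x + y) ^ 2 / (2 * t)))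

lemma integral_exp_mul_sin_mul_sin {t : ℝ} (ht : 0 < t) (x y : ℝ) :
    ∫ k, exp (-(k ^ 2 * t) / 2) * (sin (k * x) * sin (k * y)) = π * killedHeatKernel t x y := by
  have ht₂ : 0 < t / 2 := half_pos ht
  have hprod : ∀ k, exp (-(k ^ 2 * t) / 2) * (sin (k * x) * sin (k * y)) =
      (cos ((x - y) * k) * exp (-(t / 2) * k ^ 2) -
        cos ((x + y) * k) * exp (-(t / 2) * k ^ 2)) / 2 := by
    intro k
    rw [show (x - y) * k = k * x - k * y by ring, show (x + y) * k = k * x + k * y by ring,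
      cos_sub, cos_add, show -(k ^ 2 * t) / 2 = -(t / 2) * k ^ 2 by ring]
    ring
  have hsqrt : √(π / (t / 2)) = 2 * π * (√(2 * π * t))⁻¹ := by
    rw [eq_mul_inv_iff_mul_eq₀ (by positivity), ← sqrt_mul (by positivity),
      show π / (t / 2) * (2 * π * t) = (2 * π) ^ 2 by field_simp, sqrt_sq (by positivity)]
  simp_rw [hprod]
  rw [integral_div, integral_sub (integrable_cos_mul_exp_neg_mul_sq ht₂ _)
    (integrable_cos_mul_exp_neg_mul_sq ht₂ _), integral_cos_mul_exp_neg_mul_sq ht₂,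
    integral_cos_mul_exp_neg_mul_sq ht₂, killedHeatKernel, hsqrt,
    show 4 * (t / 2) = 2 * t by ring]
  ring

noncomputable def qIntegrand (ξ t x y k : ℝ) : ℝ :=
  exp (-(k ^ 2 * t) / 2) * scaledKik ξ k x * scaledKik ξ k y * (k * (sinh (π * ξ * k) / ξ))

lemma Qxi_eq_integral_qIntegrand {ξ : ℝ} (hξ : ξ ≠ 0) (t x y : ℝ) :
    Qxi ξ t y x = 1 / π ^ 2 * ∫ k, qIntegrand ξ t x y k := by
  unfold Qxi qIntegrand scaledKik
  congr 1
  refine integral_congr_ae (Eventually.of_forall fun k => ?_)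
  field_simp

lemma continuous_qIntegrand (ξ t x y : ℝ) : Continuous (qIntegrand ξ t x y) := by
  have hK : ∀ x, Continuous fun k => scaledKik ξ k x := fun x =>
    continuous_const.mul ((continuous_Kik (exp_pos _)).comp (continuous_const_mul ξ))
  unfold qIntegrand
  have := hK x
  have := hK y
  fun_prop

lemma abs_mul_sinh_div_le {ξ : ℝ} (hξ : 0 < ξ) (hξ₁ : ξ ≤ 1) (k : ℝ) :
    |k * (sinh (π * ξ * k) / ξ)| ≤ π * k ^ 2 * exp (π * |k|) := by
  have hsinh : |sinh (π * ξ * k)| ≤ π * ξ * |k| * exp (π * |k|) := by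
    rw [abs_sinh, abs_mul, abs_of_pos (by positivity : 0 < π * ξ)]
    refine (sinh_le_mul_exp (by positivity)).trans (mul_le_mul_of_nonneg_left ?_ (by positivity))
    exact exp_le_exp.2 (mul_le_mul_of_nonneg_right (mul_le_of_le_one_right pi_pos.le hξ₁)
      (abs_nonneg k))
  rw [abs_mul, abs_div, abs_of_pos hξ, mul_div_assoc', div_le_iff₀ hξ, ← sq_abs k]
  nlinarith [abs_nonneg k]

lemma abs_qIntegrand_le {ξ t : ℝ} (hξ : 0 < ξ) (hξ₁ : ξ ≤ 1) (ht : 0 < t) (x y k : ℝ) :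
    |qIntegrand ξ t x y k| ≤
      exp x * exp y * π * exp (π ^ 2 / t) * (k ^ 2 * exp (-(t / 4) * k ^ 2)) := by
  have hgauss : exp (-(k ^ 2 * t) / 2) * exp (π * |k|) ≤
      exp (π ^ 2 / t) * exp (-(t / 4) * k ^ 2) := by
    rw [← exp_add, ← exp_add, exp_le_exp]
    nlinarith [mul_abs_le_sq_div_add ht π k]
  calc |qIntegrand ξ t x y k|
      = exp (-(k ^ 2 * t) / 2) * |scaledKik ξ k x| * |scaledKik ξ k y| *
          |k * (sinh (π * ξ * k) / ξ)| := by
        rw [qIntegrand, abs_mul, abs_mul, abs_mul, abs_of_pos (exp_pos _)]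
    _ ≤ exp (-(k ^ 2 * t) / 2) * exp x * exp y * (π * k ^ 2 * exp (π * |k|)) := by
        gcongr
        exacts [abs_scaledKik_le hξ hξ₁ k x, abs_scaledKik_le hξ hξ₁ k y,
          abs_mul_sinh_div_le hξ hξ₁ k]
    _ = exp x * exp y * π * k ^ 2 * (exp (-(k ^ 2 * t) / 2) * exp (π * |k|)) := by ring
    _ ≤ exp x * exp y * π * k ^ 2 * (exp (π ^ 2 / t) * exp (-(t / 4) * k ^ 2)) := by gcongr
    _ = _ := by ring

lemma tendsto_qIntegrand (t : ℝ) {x y : ℝ} (hx : 0 ≤ x) (hy : 0 ≤ y) (k : ℝ) :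
    Tendsto (fun ξ => qIntegrand ξ t x y k) (𝓝[>] 0)
      (𝓝 (π * (exp (-(k ^ 2 * t) / 2) * (sin (k * x) * sin (k * y))))) := by
  have hsinh : Tendsto (fun ξ => k * (sinh (π * ξ * k) / ξ)) (𝓝[>] 0) (𝓝 (k * (π * k))) := by
    simpa only [mul_right_comm π] using (tendsto_sinh_mul_div (π * k)).const_mul k
  have h : Tendsto (fun ξ => qIntegrand ξ t x y k) (𝓝[>] 0) (𝓝 (exp (-(k ^ 2 * t) / 2) *
      (∫ v in Ioo 0 x, cos (k * v)) * (∫ v in Ioo 0 y, cos (k * v)) * (k * (π * k)))) :=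
    (((tendsto_scaledKik k x).const_mul _).mul (tendsto_scaledKik k y)).mul hsinh
  convert h using 2
  rw [← mul_integral_Ioo_cos hx, ← mul_integral_Ioo_cos hy]
  ring

lemma tendsto_Qxi {t x y : ℝ} (ht : 0 < t) (hx : 0 ≤ x) (hy : 0 ≤ y) :
    Tendsto (fun ξ => Qxi ξ t y x) (𝓝[>] 0) (𝓝 (killedHeatKernel t x y)) := by
  have hlim : Tendsto (fun ξ => ∫ k, qIntegrand ξ t x y k) (𝓝[>] 0)
      (𝓝 (∫ k, π * (exp (-(k ^ 2 * t) / 2) * (sin (k * x) * sin (k * y))))) := by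
    refine tendsto_integral_filter_of_dominated_convergence
      (fun k => exp x * exp y * π * exp (π ^ 2 / t) * (k ^ 2 * exp (-(t / 4) * k ^ 2)))
      (Eventually.of_forall fun ξ => (continuous_qIntegrand ξ t x y).aestronglyMeasurable) ?_
      ((integrable_sq_mul_exp_neg_mul_sq (by positivity)).const_mul _)
      (Eventually.of_forall (tendsto_qIntegrand t hx hy))
    filter_upwards [Ioc_mem_nhdsGT one_pos] with ξ hξ
    exact Eventually.of_forall fun k => by simpa using abs_qIntegrand_le hξ.1 hξ.2 ht x y k
  rw [integral_const_mul, integral_exp_mul_sin_mul_sin ht] at hlim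
  have hval : 1 / π ^ 2 * (π * (π * killedHeatKernel t x y)) = killedHeatKernel t x y := by
    field_simp
  refine hval ▸ (hlim.const_mul (1 / π ^ 2)).congr' ?_
  filter_upwards [self_mem_nhdsWithin] with ξ hξ
  exact (Qxi_eq_integral_qIntegrand (ne_of_gt hξ) t x y).symm

/-- As `ξ → 0⁺`, the conditioned transition density `P_ξ(t,y|x)` converges to the
transition density of the three-dimensional Bessel process BES(3). -/
theorem Pxi_xi_to_zero_limit_bessel (t : ℝ) (ht : 0 < t) (x y : ℝ) (hx : 0 < x) (hy : 0 < y) :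
    Tendsto (fun ξ : ℝ =>
        (K0 (Real.exp (-(y / ξ))) / K0 (Real.exp (-(x / ξ)))) * Qxi ξ t y x) (𝓝[>] 0)
      (𝓝 ((y / x) * ((Real.sqrt (2 * Real.pi * t))⁻¹ *
        (Real.exp (-(x - y) ^ 2 / (2 * t)) - Real.exp (-(x + y) ^ 2 / (2 * t)))))) :=
  (tendsto_K0_div_K0 hx hy.le).mul (tendsto_Qxi ht hx.le hy.le)
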